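/- Let n ≥ 2, let w₁,…,w_{n−1} > 0, and let C be the chain with these weights on vertices 1,…,n, with noncommutative length λ(C) = d^D(1,n) and geodesic length ℓ(C) = Σ_{i=1}^{n−1} w_i. Then ℓ(C)/(2·cos(π/(n+1))) ≤ λ(C) ≤ (n/2)·max_{1≤i≤n−1} w_i. -/

import Mathlib

open scoped ENNReal

/-- The operator norm on square matrices induced by the Euclidean (ℓ²) norm. -/
noncomputable def opNorm {ι : Type*} [Finite ι] (M : Matrix ι ι ℂ) : ℝ :=
  letI := Fintype.ofFinite ι
  letI := Classical.decEq ι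
  ‖Matrix.toEuclideanCLM (𝕜 := ℂ) M‖

/-- The commutator `[D, π(a)]` of a matrix with the diagonal matrix of `a`. -/
noncomputable def commD {ι : Type*} [Finite ι] (D : Matrix ι ι ℂ) (a : ι → ℂ) : Matrix ι ι ℂ :=
  letI := Fintype.ofFinite ι
  letI := Classical.decEq ι
  D * Matrix.diagonal a - Matrix.diagonal a * D

/-- Connes' noncommutative distance associated to the Dirac operator `D`. -/
noncomputable def ncDist {ι : Type*} [Finite ι] (D : Matrix ι ι ℂ) (i j : ι) : ℝ≥0∞ :=
  ⨆ (a : ι → ℂ) (_ : opNorm (commD D a) ≤ 1), ENNReal.ofReal ‖a i - a j‖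

/-- The weight of an edge: the inverse of `|D i j|` (infinite if `D i j = 0`). -/
noncomputable def eWeight {ι : Type*} (D : Matrix ι ι ℂ) (u v : ι) : ℝ≥0∞ :=
  (ENNReal.ofReal ‖D u v‖)⁻¹

/-- Adjacency in the graph `G_D`. -/
def Adjac {ι : Type*} (D : Matrix ι ι ℂ) (u v : ι) : Prop := u ≠ v ∧ D u v ≠ 0

/-- The length of a walk `i :: p` computed with weights `eWeight D`. -/
noncomputable def walkLength {ι : Type*} (D : Matrix ι ι ℂ) : ι → List ι → ℝ≥0∞
  | _, [] => 0
  | u, v :: rest => eWeight D u v + walkLength D v rest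

/-- `i :: p` is a walk from `i` to `j` in the graph `G_D`. -/
def IsWalk {ι : Type*} (D : Matrix ι ι ℂ) (i j : ι) (p : List ι) : Prop :=
  List.Chain (Adjac D) i p ∧ (i :: p).getLast (List.cons_ne_nil _ _) = j

/-- `i` and `j` lie in the same connected component of `G_D`. -/
def Conn {ι : Type*} (D : Matrix ι ι ℂ) (i j : ι) : Prop := ∃ p, IsWalk D i j p

/-- The geodesic (weighted shortest-path) distance on `G_D`. -/
noncomputable def gDist {ι : Type*} (D : Matrix ι ι ℂ) (i j : ι) : ℝ≥0∞ :=
  ⨅ (p : List ι) (_ : IsWalk D i j p), walkLength D i p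


/-- The Dirac operator of the chain (weighted path graph) on `n` vertices with
weights `w 0, …, w (n-2)`. -/
noncomputable def chainD (n : ℕ) (w : ℕ → ℝ) : Matrix (Fin n) (Fin n) ℂ :=
  Matrix.of fun i j =>
    if (i : ℕ) + 1 = (j : ℕ) then (((w (i : ℕ))⁻¹ : ℝ) : ℂ)
    else if (j : ℕ) + 1 = (i : ℕ) then (((w (j : ℕ))⁻¹ : ℝ) : ℂ)
    else 0

/-
Write `θ = π / (n + 1)` and `M = [D, π(a)]`, so `M i j = D i j * (a j - a i)` is supported on the
edges of the path.

Lower bound: for `a k = (w₀ + ⋯ + w_{k-1}) / (2 cos θ)` every edge entry of `M` has modulus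
`(2 cos θ)⁻¹`. The vector `(sin ((j + 1) θ))_j` is a positive eigenvector of the adjacency matrix
of the path with eigenvalue `2 cos θ`, so the Schur test with these weights gives `‖M‖ ≤ 1`.

Upper bound: choosing unimodular vectors `x, y` recursively along the path so that every edge term
`y_k M_{k,k+1} x_{k+1}`, `y_{k+1} M_{k+1,k} x_k` of `yᵀ M x` is the modulus of its entry gives
`2 ∑ |a_{k+1} - a_k| / w_k = |yᵀ M x| ≤ ‖y‖ ‖M‖ ‖x‖ = n ‖M‖`; now telescope
`|a_{n-1} - a_0| ≤ ∑ |a_{k+1} - a_k| ≤ max w · ∑ |a_{k+1} - a_k| / w_k`.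
-/

open Finset Matrix Real SimpleGraph

instance (n : ℕ) : DecidableRel (pathGraph n).Adj := fun _ _ => decidable_of_iff' _ pathGraph_adj

lemma commD_apply {ι : Type*} [Finite ι] (D : Matrix ι ι ℂ) (a : ι → ℂ) (i j : ι) :
    commD D a i j = D i j * (a j - a i) := by
  unfold commD
  simp only [Matrix.sub_apply, mul_diagonal, diagonal_mul]
  ring

section OpNorm

variable {ι : Type*} [Fintype ι]

lemma opNorm_eq_norm_toEuclideanCLM [DecidableEq ι] (M : Matrix ι ι ℂ) :
    opNorm M = ‖toEuclideanCLM (𝕜 := ℂ) M‖ := by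
  unfold opNorm
  congr!

lemma sum_sq_sum_mul_le_of_schur {K : ι → ι → ℝ} (hK : ∀ i j, 0 ≤ K i j) {p : ι → ℝ}
    (hp : ∀ i, 0 < p i) {c : ℝ} (hc : 0 ≤ c) (hrow : ∀ i, ∑ j, K i j * p j ≤ c * p i)
    (hcol : ∀ j, ∑ i, K i j * p i ≤ c * p j) (v : ι → ℝ) :
    ∑ i, (∑ j, K i j * v j) ^ 2 ≤ c ^ 2 * ∑ j, v j ^ 2 := by
  have hq : ∀ i j, 0 ≤ K i j * (v j ^ 2 / p j) := fun i j =>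
    mul_nonneg (hK i j) (div_nonneg (sq_nonneg _) (hp j).le)
  -- weighted Cauchy–Schwarz: `K v = √(K p) · √(K v² / p)`
  have hcs : ∀ i, (∑ j, K i j * v j) ^ 2 ≤ c * p i * ∑ j, K i j * (v j ^ 2 / p j) := by
    intro i
    refine (sum_sq_le_sum_mul_sum_of_sq_le_mul _ (fun j _ => mul_nonneg (hK i j) (hp j).le)
      (fun j _ => hq i j) (fun j _ => le_of_eq ?_)).trans
      (mul_le_mul_of_nonneg_right (hrow i) (sum_nonneg fun j _ => hq i j))
    field_simp [(hp j).ne']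
  calc ∑ i, (∑ j, K i j * v j) ^ 2
      ≤ ∑ i, c * p i * ∑ j, K i j * (v j ^ 2 / p j) := sum_le_sum fun i _ => hcs i
    _ = c * ∑ j, (∑ i, K i j * p i) * (v j ^ 2 / p j) := by
        simp only [mul_sum, sum_mul]
        rw [sum_comm]
        exact sum_congr rfl fun j _ => sum_congr rfl fun i _ => by ring
    _ ≤ c * ∑ j, c * p j * (v j ^ 2 / p j) := by
        gcongr with j
        · exact div_nonneg (sq_nonneg _) (hp j).le
        · exact hcol j
    _ = c ^ 2 * ∑ j, v j ^ 2 := by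
        rw [mul_sum, mul_sum]
        refine sum_congr rfl fun j _ => ?_
        field_simp [(hp j).ne']

theorem opNorm_le_of_schur [DecidableEq ι] (M : Matrix ι ι ℂ) {p : ι → ℝ} (hp : ∀ i, 0 < p i)
    {c : ℝ} (hc : 0 ≤ c) (hrow : ∀ i, ∑ j, ‖M i j‖ * p j ≤ c * p i)
    (hcol : ∀ j, ∑ i, ‖M i j‖ * p i ≤ c * p j) : opNorm M ≤ c := by
  rw [opNorm_eq_norm_toEuclideanCLM]
  refine ContinuousLinearMap.opNorm_le_bound _ hc fun x => ?_
  rw [← sq_le_sq₀ (norm_nonneg _) (by positivity), mul_pow, PiLp.norm_sq_eq_of_L2,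
    PiLp.norm_sq_eq_of_L2]
  refine le_trans ?_ (sum_sq_sum_mul_le_of_schur (fun i j => norm_nonneg (M i j)) hp hc hrow
    hcol fun j => ‖x j‖)
  refine sum_le_sum fun i _ => pow_le_pow_left₀ (norm_nonneg _) ?_ 2
  simp only [ofLp_toEuclideanCLM, mulVec, dotProduct]
  exact (norm_sum_le _ _).trans_eq (by simp only [norm_mul])

lemma norm_dotProduct_mulVec_le [DecidableEq ι] (M : Matrix ι ι ℂ)
    {x y : ι → ℂ} (hx : ∀ i, ‖x i‖ = 1) (hy : ∀ i, ‖y i‖ = 1) :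
    ‖y ⬝ᵥ M *ᵥ x‖ ≤ Fintype.card ι * opNorm M := by
  have hnorm : ∀ v : ι → ℂ, (∀ i, ‖v i‖ = 1) → ‖WithLp.toLp 2 v‖ = √(Fintype.card ι) := by
    intro v hv
    simp [EuclideanSpace.norm_eq, hv]
  set T := toEuclideanCLM (𝕜 := ℂ) M
  have hinner : y ⬝ᵥ M *ᵥ x = inner ℂ (WithLp.toLp 2 (star y)) (T (WithLp.toLp 2 x)) := by
    rw [toEuclideanCLM_toLp, EuclideanSpace.inner_toLp_toLp, star_star, dotProduct_comm]
  calc ‖y ⬝ᵥ M *ᵥ x‖ ≤ ‖WithLp.toLp 2 (star y)‖ * (‖T‖ * ‖WithLp.toLp 2 x‖) := by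
        rw [hinner]
        exact (norm_inner_le_norm _ _).trans (by gcongr; exact T.le_opNorm _)
    _ = Fintype.card ι * opNorm M := by
        rw [mul_comm, hnorm x hx, hnorm (star y) (by simpa using hy),
          opNorm_eq_norm_toEuclideanCLM, mul_assoc, Real.mul_self_sqrt (Nat.cast_nonneg _),
          mul_comm]

end OpNorm

lemma pathGraph_adjMatrix_mulVec_apply {n : ℕ} {g : ℕ → ℝ} (h0 : g 0 = 0) (hn : g (n + 1) = 0)
    (i : Fin n) : ((pathGraph n).adjMatrix ℝ *ᵥ fun j => g (j + 1)) i = g i + g (i + 2) := by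
  have hsplit : ∀ j : ℕ, (if (i : ℕ) + 1 = j ∨ j + 1 = i then g (j + 1) else 0) =
      (if (i : ℕ) + 1 = j then g (j + 1) else 0) + (if j + 1 = i then g (j + 1) else 0) := by
    intro j
    split_ifs <;> first | omega | simp
  simp only [mulVec, dotProduct, adjMatrix_apply, pathGraph_adj, ite_mul, one_mul, zero_mul]
  rw [Fin.sum_univ_eq_sum_range
      (fun j => if (i : ℕ) + 1 = j ∨ j + 1 = i then g (j + 1) else 0),
    sum_congr rfl fun j _ => hsplit j, sum_add_distrib, sum_ite_eq, add_comm]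
  congr 1
  · obtain ⟨_ | k, hk⟩ := i
    · simp [h0]
    · simp only [add_left_inj, sum_ite_eq', mem_range]
      rw [if_pos (by omega)]
  · split_ifs with h
    · rfl
    · rw [show (i : ℕ) + 2 = n + 1 by simp at h; omega, hn]

lemma pathGraph_adjMatrix_mulVec_sin (n : ℕ) :
    (pathGraph n).adjMatrix ℝ *ᵥ (fun j : Fin n => sin ((j + 1) * (π / (n + 1)))) =
      fun i : Fin n => 2 * cos (π / (n + 1)) * sin ((i + 1) * (π / (n + 1))) := by
  ext i
  set θ := π / (n + 1)
  have h := pathGraph_adjMatrix_mulVec_apply (g := fun j : ℕ => sin (j * θ)) (by simp)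
    (by push_cast; rw [mul_div_cancel₀ _ (by positivity), sin_pi]) i
  push_cast at h
  rw [h, show ((i : ℝ) + 2) * θ = ((i : ℝ) + 1) * θ + θ by ring,
    show (i : ℝ) * θ = ((i : ℝ) + 1) * θ - θ by ring, sin_add, sin_sub]
  ring

theorem opNorm_le_of_norm_le_pathGraph {n : ℕ} (hn : 1 ≤ n) (M : Matrix (Fin n) (Fin n) ℂ)
    {r : ℝ} (hr : 0 ≤ r) (hM : ∀ i j, ‖M i j‖ ≤ r * (pathGraph n).adjMatrix ℝ i j) :
    opNorm M ≤ 2 * r * cos (π / (n + 1)) := by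
  set θ := π / (n + 1)
  have hθ : 0 < θ := by positivity
  have hp : ∀ j : Fin n, 0 < sin ((j + 1) * θ) := by
    refine fun j => sin_pos_of_pos_of_lt_pi (by positivity) ?_
    calc ((j : ℝ) + 1) * θ < (n + 1) * θ := by gcongr; exact_mod_cast j.isLt
      _ = π := mul_div_cancel₀ _ (by positivity)
  have hcos : 0 ≤ cos θ := cos_nonneg_of_neg_pi_div_two_le_of_le (by linarith [pi_pos])
    (div_le_div_of_nonneg_left pi_pos.le two_pos (by norm_cast; omega))
  have hrow : ∀ i (K : Fin n → ℝ), (∀ j, K j ≤ r * (pathGraph n).adjMatrix ℝ i j) →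
      ∑ j, K j * sin ((j + 1) * θ) ≤ 2 * r * cos θ * sin ((i + 1) * θ) := by
    intro i K hK
    calc ∑ j, K j * sin ((j + 1) * θ)
        ≤ ∑ j, r * (pathGraph n).adjMatrix ℝ i j * sin ((j + 1) * θ) :=
          sum_le_sum fun j _ => mul_le_mul_of_nonneg_right (hK j) (hp j).le
      _ = r * ((pathGraph n).adjMatrix ℝ *ᵥ fun j : Fin n => sin ((j + 1) * θ)) i := by
          simp only [mulVec, dotProduct, mul_sum, mul_assoc]
      _ = 2 * r * cos θ * sin ((i + 1) * θ) := by
          rw [pathGraph_adjMatrix_mulVec_sin]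
          ring
  refine opNorm_le_of_schur M hp (by positivity) (fun i => hrow i _ (hM i)) fun j => ?_
  refine hrow j _ fun i => (hM i j).trans_eq ?_
  simp only [adjMatrix_apply, (pathGraph n).adj_comm]

lemma sum_sum_eq_of_pathGraph {R : Type*} [AddCommMonoid R] {m : ℕ}
    (f : Fin (m + 1) → Fin (m + 1) → R)
    (hf : ∀ i j, ¬ (pathGraph (m + 1)).Adj i j → f i j = 0) :
    ∑ i, ∑ j, f i j = ∑ k : Fin m, (f k.castSucc k.succ + f k.succ k.castSucc) := by
  have hsplit : ∀ i j, f i j =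
      (if (i : ℕ) + 1 = j then f i j else 0) + (if (j : ℕ) + 1 = i then f i j else 0) := by
    intro i j
    by_cases hij : (pathGraph (m + 1)).Adj i j
    · rcases pathGraph_adj.mp hij with h | h
      · rw [if_pos h, if_neg (by omega), add_zero]
      · rw [if_neg (by omega), if_pos h, zero_add]
    · rw [hf i j hij, ite_self, ite_self, add_zero]
  have hup : ∀ (k : Fin m) (j : Fin (m + 1)), (k.castSucc : ℕ) + 1 = j ↔ k.succ = j := by
    simp [Fin.ext_iff]
  have hdown : ∀ (k : Fin m) (j : Fin (m + 1)), (j : ℕ) + 1 = k.succ ↔ k.castSucc = j := by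
    simp [Fin.ext_iff, eq_comm]
  rw [sum_congr rfl fun i _ => sum_congr rfl fun j _ => hsplit i j]
  simp only [sum_add_distrib]
  congr 1
  · rw [Fin.sum_univ_castSucc]
    simp only [hup, Fintype.sum_ite_eq, Fin.val_last]
    rw [sum_eq_zero fun j _ => if_neg (by omega), add_zero]
  · rw [Fin.sum_univ_succ]
    simp only [hdown, Fintype.sum_ite_eq]
    rw [sum_eq_zero fun j _ => if_neg (by simp), zero_add]

lemma exists_norm_eq_one_mul_eq_norm (z : ℂ) : ∃ u : ℂ, ‖u‖ = 1 ∧ z * u = ‖z‖ := by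
  refine ⟨Complex.exp (↑(-z.arg) * Complex.I), Complex.norm_exp_ofReal_mul_I _, ?_⟩
  conv_lhs => rw [← Complex.norm_mul_exp_arg_mul_I z]
  rw [mul_assoc, ← Complex.exp_add]
  push_cast
  simp

lemma exists_unimodular_edge_products {m : ℕ} (s t : Fin m → ℂ) (hs : ∀ k, ‖s k‖ = 1)
    (ht : ∀ k, ‖t k‖ = 1) :
    ∃ x y : Fin (m + 1) → ℂ, (∀ i, ‖x i‖ = 1) ∧ (∀ i, ‖y i‖ = 1) ∧
      ∀ k, y k.castSucc * x k.succ = s k ∧ y k.succ * x k.castSucc = t k := by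
  induction m with
  | zero => exact ⟨1, 1, by simp, by simp, fun k => k.elim0⟩
  | succ m ih =>
    obtain ⟨x, y, hx, hy, hxy⟩ := ih (s ∘ Fin.castSucc) (t ∘ Fin.castSucc) (fun k => hs _)
      (fun k => ht _)
    have hstar : ∀ z : ℂ, ‖z‖ = 1 → z * star z = 1 := fun z hz => by
      rw [RCLike.star_def, RCLike.mul_conj, hz]; simp
    refine ⟨Fin.snoc x (s (Fin.last m) * star (y (Fin.last m))),
      Fin.snoc y (t (Fin.last m) * star (x (Fin.last m))), ?_, ?_, ?_⟩
    · refine Fin.lastCases ?_ fun i => ?_ <;> simp [hx, hy, hs]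
    · refine Fin.lastCases ?_ fun i => ?_ <;> simp [hx, hy, ht]
    · refine Fin.lastCases ⟨?_, ?_⟩ fun k => ?_
      · simp only [Fin.snoc_castSucc, Fin.succ_last, Fin.snoc_last]
        linear_combination s (Fin.last m) * hstar _ (hy _)
      · simp only [Fin.snoc_castSucc, Fin.succ_last, Fin.snoc_last]
        linear_combination t (Fin.last m) * hstar _ (hx _)
      · simpa only [Fin.succ_castSucc, Fin.snoc_castSucc, Function.comp_apply] using hxy k

theorem sum_norm_le_card_mul_opNorm_of_pathGraph {m : ℕ}
    (M : Matrix (Fin (m + 1)) (Fin (m + 1)) ℂ)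
    (hM : ∀ i j, ¬ (pathGraph (m + 1)).Adj i j → M i j = 0) :
    ∑ k : Fin m, (‖M k.castSucc k.succ‖ + ‖M k.succ k.castSucc‖) ≤ (m + 1) * opNorm M := by
  choose s hs hsM using fun k : Fin m => exists_norm_eq_one_mul_eq_norm (M k.castSucc k.succ)
  choose t ht htM using fun k : Fin m => exists_norm_eq_one_mul_eq_norm (M k.succ k.castSucc)
  obtain ⟨x, y, hx, hy, hxy⟩ := exists_unimodular_edge_products s t hs ht
  have hdot : y ⬝ᵥ M *ᵥ x =
      ((∑ k : Fin m, (‖M k.castSucc k.succ‖ + ‖M k.succ k.castSucc‖) : ℝ) : ℂ) := by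
    simp only [dotProduct, mulVec, mul_sum]
    rw [sum_sum_eq_of_pathGraph (fun i j => y i * (M i j * x j)) fun i j h => by simp [hM i j h]]
    push_cast
    refine sum_congr rfl fun k _ => ?_
    rw [← hsM k, ← htM k, ← (hxy k).1, ← (hxy k).2]
    ring
  have h := norm_dotProduct_mulVec_le M hx hy
  rwa [hdot, Complex.norm_real, Real.norm_of_nonneg (by positivity), Fintype.card_fin,
    Nat.cast_succ] at h

lemma norm_sub_le_sum_norm_sub {E : Type*} [SeminormedAddCommGroup E] {m : ℕ}
    (a : Fin (m + 1) → E) : ‖a (Fin.last m) - a 0‖ ≤ ∑ k : Fin m, ‖a k.succ - a k.castSucc‖ := by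
  induction m with
  | zero => simp
  | succ m ih =>
    have h := ih (fun i => a i.castSucc)
    rw [Fin.castSucc_zero] at h
    simp only [Fin.sum_univ_castSucc, Fin.succ_castSucc, Fin.succ_last]
    linarith [norm_sub_le_norm_sub_add_norm_sub (a (Fin.last (m + 1))) (a (Fin.last m).castSucc)
      (a 0)]

section Chain

variable {n : ℕ} (w : ℕ → ℝ)

lemma commD_chainD_apply (a : Fin n → ℂ) (i j : Fin n) :
    commD (chainD n w) a i j =
      if (i : ℕ) + 1 = j then ((w i)⁻¹ : ℝ) * (a j - a i)
      else if (j : ℕ) + 1 = i then ((w j)⁻¹ : ℝ) * (a j - a i) else 0 := by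
  rw [commD_apply]
  simp only [chainD, of_apply]
  split_ifs <;> ring

lemma commD_chainD_eq_zero (a : Fin n → ℂ) {i j : Fin n} (h : ¬ (pathGraph n).Adj i j) :
    commD (chainD n w) a i j = 0 := by
  rw [pathGraph_adj, not_or] at h
  rw [commD_chainD_apply, if_neg h.1, if_neg h.2]

variable {w}

lemma norm_commD_chainD_le (hw : ∀ k < n - 1, 0 < w k) {a : Fin n → ℂ} {r : ℝ}
    (ha : ∀ i j : Fin n, (i : ℕ) + 1 = j → ‖a j - a i‖ ≤ r * w i) (i j : Fin n) :
    ‖commD (chainD n w) a i j‖ ≤ r * (pathGraph n).adjMatrix ℝ i j := by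
  by_cases hadj : (pathGraph n).Adj i j
  · rw [adjMatrix_apply, if_pos hadj, mul_one, commD_chainD_apply]
    rcases pathGraph_adj.mp hadj with h | h
    · have hwi := hw i (by omega)
      rw [if_pos h, norm_mul, Complex.norm_real, norm_inv, Real.norm_of_nonneg hwi.le,
        inv_mul_le_iff₀ hwi, mul_comm]
      exact ha i j h
    · have hwj := hw j (by omega)
      rw [if_neg (by omega), if_pos h, norm_mul, Complex.norm_real, norm_inv,
        Real.norm_of_nonneg hwj.le, inv_mul_le_iff₀ hwj, mul_comm, norm_sub_rev]
      exact ha j i h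
  · rw [commD_chainD_eq_zero w a hadj, adjMatrix_apply, if_neg hadj, norm_zero, mul_zero]

lemma norm_sub_le_of_chainD {m : ℕ} (hw : ∀ k < m, 0 < w k) {W : ℝ} (hW₀ : 0 ≤ W)
    (hW : ∀ k < m, w k ≤ W) (a : Fin (m + 1) → ℂ) :
    ‖a (Fin.last m) - a 0‖ ≤ (m + 1) / 2 * W * opNorm (commD (chainD (m + 1) w) a) := by
  set M := commD (chainD (m + 1) w) a
  have hedge : ∀ k : Fin m,
      ‖a k.succ - a k.castSucc‖ ≤ W / 2 * (‖M k.castSucc k.succ‖ + ‖M k.succ k.castSucc‖) := by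
    intro k
    have hwk := hw k k.isLt
    simp only [M, commD_chainD_apply, Fin.val_succ, Fin.val_castSucc, if_pos]
    rw [if_neg (by omega), norm_mul, norm_mul, Complex.norm_real, norm_inv,
      Real.norm_of_nonneg hwk.le, norm_sub_rev, ← two_mul, ← mul_assoc, ← mul_assoc,
      div_mul_cancel₀ _ two_ne_zero]
    exact le_mul_of_one_le_left (norm_nonneg _)
      ((le_mul_inv_iff₀ hwk).mpr ((one_mul _).trans_le (hW k k.isLt)))
  calc ‖a (Fin.last m) - a 0‖ ≤ ∑ k : Fin m, ‖a k.succ - a k.castSucc‖ :=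
        norm_sub_le_sum_norm_sub a
    _ ≤ W / 2 * ∑ k : Fin m, (‖M k.castSucc k.succ‖ + ‖M k.succ k.castSucc‖) := by
        rw [mul_sum]; exact sum_le_sum fun k _ => hedge k
    _ ≤ W / 2 * ((m + 1) * opNorm M) := by
        gcongr
        exact sum_norm_le_card_mul_opNorm_of_pathGraph M fun i j => commD_chainD_eq_zero w a
    _ = (m + 1) / 2 * W * opNorm M := by ring

lemma opNorm_commD_chainD_le (hn : 1 ≤ n) (hw : ∀ k < n - 1, 0 < w k) {a : Fin n → ℂ}
    {r : ℝ} (hr : 0 ≤ r) (ha : ∀ i j : Fin n, (i : ℕ) + 1 = j → ‖a j - a i‖ ≤ r * w i) :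
    opNorm (commD (chainD n w) a) ≤ 2 * r * cos (π / (n + 1)) :=
  opNorm_le_of_norm_le_pathGraph hn _ hr (norm_commD_chainD_le hw ha)

end Chain

theorem stmt18 {n : ℕ} (hn : 2 ≤ n) (w : ℕ → ℝ) (hw : ∀ i < n - 1, 0 < w i) :
    ENNReal.ofReal ((∑ i ∈ Finset.range (n - 1), w i) /
        (2 * Real.cos (Real.pi / ((n : ℝ) + 1)))) ≤
      ncDist (chainD n w) ⟨0, by omega⟩ ⟨n - 1, by omega⟩ ∧
    ncDist (chainD n w) ⟨0, by omega⟩ ⟨n - 1, by omega⟩ ≤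
      ENNReal.ofReal (((n : ℝ) / 2) *
        (Finset.range (n - 1)).sup' (by simp; omega) w) := by
  constructor
  · have hcos : 0 < cos (π / (n + 1)) :=
      cos_pos_of_mem_Ioo ⟨by linarith [pi_pos, (by positivity : 0 < π / (n + 1))],
        div_lt_div_of_pos_left pi_pos two_pos (by norm_cast; omega)⟩
    set c := 2 * cos (π / (n + 1))
    set a : Fin n → ℂ := fun k => ((∑ i ∈ range k, w i) / c : ℝ)
    have ha : opNorm (commD (chainD n w) a) ≤ 1 := by
      refine (opNorm_commD_chainD_le (r := c⁻¹) (by omega) hw (by positivity)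
        fun i j hij => ?_).trans_eq ?_
      · simp only [a, ← hij, sum_range_succ, ← Complex.ofReal_sub, Complex.norm_real, add_div,
          add_sub_cancel_left]
        rw [Real.norm_of_nonneg (div_nonneg (hw i (by omega)).le (by positivity)),
          div_eq_inv_mul]
      · rw [mul_right_comm]
        exact mul_inv_cancel₀ (by positivity)
    refine le_iSup₂_of_le a ha (ENNReal.ofReal_le_ofReal ?_)
    simp only [a, sum_range_zero, zero_div, Complex.ofReal_zero, zero_sub, norm_neg,
      Complex.norm_real, Real.norm_eq_abs]
    exact le_abs_self _
  · obtain ⟨m, rfl⟩ : ∃ m, n = m + 1 := ⟨n - 1, by omega⟩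
    set W := (range (m + 1 - 1)).sup' (by simp; omega) w
    have hW : ∀ k < m, w k ≤ W := fun k hk => le_sup' w (mem_range.2 (by omega))
    have hW₀ : 0 ≤ W := (hw 0 (by omega)).le.trans (hW 0 (by omega))
    refine iSup₂_le fun a ha => ENNReal.ofReal_le_ofReal ?_
    calc ‖a 0 - a (Fin.last m)‖ = ‖a (Fin.last m) - a 0‖ := norm_sub_rev _ _
      _ ≤ (m + 1) / 2 * W * opNorm (commD (chainD (m + 1) w) a) :=
        norm_sub_le_of_chainD (fun k hk => hw k (by omega)) hW₀ hW a
      _ ≤ ((m + 1 : ℕ) : ℝ) / 2 * W := by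
        push_cast
        exact mul_le_of_le_one_right (by positivity) ha
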